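/- arXiv:1804.07197 — 2 statements merged into one kernel-verified Lean document; each statement's English description precedes it below -/
import Mathlib

section
/- For every σ ≥ 0 and every ε with 0 < ε < 1, the ratio [∫_ℝ (ε f(x₁) − Λ)₋^{σ+3/2} dx₁] / [∫_ℝ (ε θ'(x₁)² − Λ)₋^{σ+3/2} dx₁] tends to 1 as Λ → +∞. (Proposition 4.1 of the paper: the right-hand side of the main Berezin-type bound has the asymptotics (1+o(1)) · (L_σ/(1−ε)^{3/2}) |ω| ∫_ℝ (ε θ'(x₁)² − Λ)₋^{σ+3/2} dx₁ as Λ → ∞.) -/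
/-!
Write `D(Λ)` and `N(Λ)` for the denominator and the numerator, and `p = σ + 3/2`. Since `θ'` is
monotone, `θ` is convex, so for `x ≥ x₀ = θ₊⁻¹(θ(0) + 2π)` the increment `θ(x) - θ(x - x₀)` is at
least `θ(x₀) - θ(0) = 2π`; this pins `θ₊⁻¹(θ(x) - π)` between `x - x₀` and `x`, whence
`θ'(x - x₀)² ≤ f(x) ≤ θ'(x)²`, and symmetrically on the left tail `x ≤ x₀' = θ₋⁻¹(θ(0) + 2π)`.
The upper bound gives `D ≤ N`.
The lower bound dominates the integrand of `N` on each tail by a translate of the integrand of `D`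
restricted to a half-line, and by `Λ^p` in between, so `N ≤ D + (x₀ - x₀') Λ^p`. Finally
`D(Λ) / Λ^p → ∞`, because `ε θ'²` is bounded on arbitrarily long intervals.
-/

open Real Set Filter MeasureTheory Topology

noncomputable def negPartRpow (p z : ℝ) : ℝ := max (-z) 0 ^ p

lemma negPartRpow_nonneg (p z : ℝ) : 0 ≤ negPartRpow p z :=
  rpow_nonneg (le_max_right _ _) _

lemma antitone_negPartRpow {p : ℝ} (hp : 0 ≤ p) : Antitone (negPartRpow p) :=
  fun _ _ h => rpow_le_rpow (le_max_right _ _) (max_le_max (neg_le_neg h) le_rfl) hp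

lemma continuous_negPartRpow {p : ℝ} (hp : 0 ≤ p) : Continuous (negPartRpow p) :=
  (continuous_rpow_const hp).comp (continuous_neg.max continuous_const)

lemma negPartRpow_of_nonneg (p : ℝ) {z : ℝ} (hz : 0 ≤ z) (hp : 0 < p) : negPartRpow p z = 0 := by
  rw [negPartRpow, max_eq_right (by linarith), zero_rpow hp.ne']

lemma negPartRpow_neg (p : ℝ) {Λ : ℝ} (hΛ : 0 ≤ Λ) : negPartRpow p (-Λ) = Λ ^ p := by
  rw [negPartRpow, neg_neg, max_eq_left hΛ]

lemma integrable_negPartRpow_sub {ψ : ℝ → ℝ} {p : ℝ} (hp : 0 < p) (hψm : Measurable ψ)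
    (hψ0 : ∀ x, 0 ≤ ψ x) (hψ : Tendsto ψ (cocompact ℝ) atTop) (Λ : ℝ) :
    Integrable fun x => negPartRpow p (ψ x - Λ) := by
  obtain ⟨K, hK, hKψ⟩ := mem_cocompact.1 (hψ.eventually_gt_atTop Λ)
  refine Integrable.mono' ((integrableOn_const (C := negPartRpow p (-Λ))
    hK.measure_lt_top.ne).integrable_indicator hK.measurableSet)
    ((continuous_negPartRpow hp.le).measurable.comp (hψm.sub_const Λ)).aestronglyMeasurable
    (Eventually.of_forall fun x => ?_)
  rw [Real.norm_of_nonneg (negPartRpow_nonneg _ _)]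
  by_cases hx : x ∈ K
  · rw [indicator_of_mem hx]
    exact antitone_negPartRpow hp.le (by linarith [hψ0 x] : -Λ ≤ ψ x - Λ)
  · rw [indicator_of_notMem hx, negPartRpow_of_nonneg p (sub_nonneg.2 (hKψ hx).le) hp]

lemma tendsto_integral_negPartRpow_sub_div_rpow {ψ : ℝ → ℝ} {p : ℝ} (hp : 0 < p)
    (hψ : ∀ T, BddAbove (ψ '' Icc 0 T)) (hint : ∀ Λ, Integrable fun x => negPartRpow p (ψ x - Λ)) :
    Tendsto (fun Λ => (∫ x, negPartRpow p (ψ x - Λ)) / Λ ^ p) atTop atTop := by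
  refine tendsto_atTop.2 fun B => ?_
  set T := 2 ^ p * |B|
  have hT : 0 ≤ T := by positivity
  obtain ⟨M, hM⟩ := hψ T
  filter_upwards [eventually_gt_atTop 0, eventually_ge_atTop (2 * M)] with Λ hΛ hΛM
  have hbulk : ∀ x ∈ Icc 0 T, Λ ^ p / 2 ^ p ≤ negPartRpow p (ψ x - Λ) := fun x hx => by
    rw [← div_rpow hΛ.le zero_le_two]
    refine rpow_le_rpow (by positivity) (le_max_of_le_left ?_) hp.le
    linarith [hM (mem_image_of_mem ψ hx)]
  have hbulk_int : T * (Λ ^ p / 2 ^ p) ≤ ∫ x in Icc 0 T, negPartRpow p (ψ x - Λ) := by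
    calc T * (Λ ^ p / 2 ^ p) = ∫ _ in Icc 0 T, Λ ^ p / 2 ^ p := by simp [hT]
      _ ≤ _ := setIntegral_mono_on (integrableOn_const measure_Icc_lt_top.ne)
          (hint Λ).integrableOn measurableSet_Icc hbulk
  calc B ≤ T * (Λ ^ p / 2 ^ p) / Λ ^ p := by
        rw [mul_div_assoc', mul_div_right_comm, mul_div_cancel_right₀ _ (by positivity),
          mul_div_cancel_left₀ _ (by positivity)]
        exact le_abs_self B
    _ ≤ (∫ x, negPartRpow p (ψ x - Λ)) / Λ ^ p := by
        gcongr
        exact hbulk_int.trans (setIntegral_le_integral (hint Λ)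
          (Eventually.of_forall fun x => negPartRpow_nonneg _ _))

lemma integral_le_of_le_translates {g h : ℝ → ℝ} {a b M : ℝ} (hab : a ≤ b) (hg : Integrable g)
    (hg0 : ∀ x, 0 ≤ g x) (hh : AEStronglyMeasurable h) (hh0 : ∀ x, 0 ≤ h x) (hM : ∀ x, h x ≤ M)
    (hright : ∀ x, b < x → h x ≤ g (x - b)) (hleft : ∀ x, x ≤ a → h x ≤ g (x - a)) :
    Integrable h ∧ ∫ x, h x ≤ (∫ x, g x) + (b - a) * M := by
  have hg₁ : Integrable fun x => (Ioi 0).indicator g (x - b) :=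
    (hg.indicator measurableSet_Ioi).comp_sub_right b
  have hg₂ : Integrable fun x => (Iic 0).indicator g (x - a) :=
    (hg.indicator measurableSet_Iic).comp_sub_right a
  have hg₃ : Integrable ((Icc a b).indicator fun _ => M) :=
    (integrableOn_const measure_Icc_lt_top.ne).integrable_indicator measurableSet_Icc
  set S : ℝ → ℝ := fun x => (Ioi 0).indicator g (x - b) + (Iic 0).indicator g (x - a) +
    (Icc a b).indicator (fun _ => M) x
  have hhS : ∀ x, h x ≤ S x := fun x => by
    have h₁ := indicator_nonneg (fun y _ => hg0 y) (x - b) (s := Ioi 0)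
    have h₂ := indicator_nonneg (fun y _ => hg0 y) (x - a) (s := Iic 0)
    have h₃ := indicator_nonneg (fun _ _ => (hh0 x).trans (hM x)) x (s := Icc a b)
    rcases lt_or_ge b x with hbx | hxb
    · have := indicator_of_mem (mem_Ioi.2 (sub_pos.2 hbx)) g
      linarith [hright x hbx]
    rcases le_or_gt x a with hxa | hax
    · have := indicator_of_mem (mem_Iic.2 (sub_nonpos.2 hxa)) g
      linarith [hleft x hxa]
    · have := indicator_of_mem (mem_Icc.2 ⟨hax.le, hxb⟩) fun _ => M
      linarith [hM x]
  have hS : Integrable S := (hg₁.add hg₂).add hg₃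
  have hint : Integrable h :=
    hS.mono' hh (Eventually.of_forall fun x => (norm_of_nonneg (hh0 x)).trans_le (hhS x))
  refine ⟨hint, (integral_mono hint hS hhS).trans_eq ?_⟩
  simp only [S]
  rw [integral_add (f := fun x => _ + _) (hg₁.add hg₂) hg₃, integral_add hg₁ hg₂,
    integral_sub_right_eq_self, integral_sub_right_eq_self, integral_indicator measurableSet_Ioi,
    integral_indicator measurableSet_Iic, integral_indicator_const _ measurableSet_Icc,
    Real.volume_real_Icc_of_le hab, smul_eq_mul,
    ← intervalIntegral.integral_Iic_add_Ioi hg.integrableOn hg.integrableOn]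
  ring

lemma tendsto_div_nhds_one_of_le_of_le_add {α : Type*} {l : Filter α} {N D E : α → ℝ} {C : ℝ}
    (hDE : Tendsto (fun t => D t / E t) l atTop) (hE : ∀ᶠ t in l, 0 < E t)
    (hlow : ∀ᶠ t in l, D t ≤ N t) (hup : ∀ᶠ t in l, N t ≤ D t + C * E t) :
    Tendsto (fun t => N t / D t) l (𝓝 1) := by
  have hED : Tendsto (fun t => E t / D t) l (𝓝 0) := by
    simpa only [Pi.inv_def, inv_div] using hDE.inv_tendsto_atTop
  have hD : ∀ᶠ t in l, 0 < D t := by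
    filter_upwards [hDE.eventually_gt_atTop 0, hE] with t ht hEt
    exact (div_pos_iff_of_pos_right hEt).1 ht
  refine tendsto_of_tendsto_of_tendsto_of_le_of_le' tendsto_const_nhds
    (by simpa using (hED.const_mul C).const_add 1) ?_ ?_
  · filter_upwards [hD, hlow] with t hDt ht
    exact (one_le_div hDt).2 ht
  · filter_upwards [hD, hup] with t hDt ht
    rw [← mul_div_assoc, one_add_div hDt.ne']
    exact div_le_div_of_nonneg_right ht hDt.le


section Profile

variable {θ θ' θinv f : ℝ → ℝ} {a b : ℝ}

def IsLeastNonnegPreimage (θ θinv : ℝ → ℝ) : Prop :=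
  ∀ α, θ 0 ≤ α → 0 ≤ θinv α ∧ θ (θinv α) = α ∧ ∀ z, 0 ≤ z → θ z = α → θinv α ≤ z

def IsGreatestNonposPreimage (θ θinv : ℝ → ℝ) : Prop :=
  ∀ α, θ 0 ≤ α → θinv α ≤ 0 ∧ θ (θinv α) = α ∧ ∀ z, z ≤ 0 → θ z = α → z ≤ θinv α

lemma IsGreatestNonposPreimage.neg (h : IsGreatestNonposPreimage θ θinv) :
    IsLeastNonnegPreimage (fun x => θ (-x)) fun α => -θinv α := fun α hα => by
  obtain ⟨h₀, hθ, hmax⟩ := h α (by simpa using hα)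
  exact ⟨neg_nonneg.2 h₀, by simpa using hθ,
    fun z hz hzα => neg_le.1 (hmax _ (neg_nonpos.2 hz) hzα)⟩

structure TailBounds (θ' f : ℝ → ℝ) (x₀ : ℝ) : Prop where
  zero_le : 0 ≤ x₀
  monotoneOn : MonotoneOn f (Ici x₀)
  sq_sub_le : ∀ x, x₀ ≤ x → θ' (x - x₀) ^ 2 ≤ f x
  le_sq : ∀ x, x₀ ≤ x → f x ≤ θ' x ^ 2

lemma monotoneOn_Ici_of_hasDerivAt (hθ : ∀ x, HasDerivAt θ (θ' x) x)
    (hpos : ∀ x, 0 ≤ x → 0 ≤ θ' x) : MonotoneOn θ (Ici 0) :=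
  monotoneOn_of_hasDerivWithinAt_nonneg (convex_Ici 0)
    (fun x _ => (hθ x).continuousAt.continuousWithinAt) (fun x _ => (hθ x).hasDerivWithinAt)
    fun x hx => hpos x (interior_subset hx)

lemma monotone_sub_comp_add_of_monotone_deriv (hθ : ∀ x, HasDerivAt θ (θ' x) x)
    (hmono : Monotone θ') {h : ℝ} (hh : 0 ≤ h) : Monotone fun t => θ (t + h) - θ t :=
  monotone_of_hasDerivAt_nonneg (fun t => ((hθ (t + h)).comp_add_const t h).sub (hθ t))
    fun _ => sub_nonneg.2 (hmono (le_add_of_nonneg_right hh))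

lemma IsLeastNonnegPreimage.monotoneOn (hinv : IsLeastNonnegPreimage θ θinv)
    (hθ : MonotoneOn θ (Ici 0)) : MonotoneOn θinv (Ici (θ 0)) := by
  intro α hα β hβ hαβ
  obtain ⟨-, hαθ, hαmin⟩ := hinv α hα
  obtain ⟨hβ₀, hβθ, -⟩ := hinv β hβ
  by_contra! h
  have hβα : β ≤ α := hβθ ▸ hαθ ▸ hθ hβ₀ (hβ₀.trans h.le) h.le
  exact h.not_ge (hαmin _ hβ₀ (by rw [hβθ]; linarith))

lemma IsLeastNonnegPreimage.inv_sub_mem_Icc (hinv : IsLeastNonnegPreimage θ θinv)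
    (hθ : ∀ x, HasDerivAt θ (θ' x) x) (hmono : Monotone θ') (hpos : ∀ x, 0 ≤ x → 0 ≤ θ' x)
    {c d x : ℝ} (hc : 0 < c) (hcd : c < d) (hx : θinv (θ 0 + d) ≤ x) :
    θinv (θ x - c) ∈ Icc (x - θinv (θ 0 + d)) x := by
  have hθmono := monotoneOn_Ici_of_hasDerivAt hθ hpos
  obtain ⟨hx₀, hx₀θ, -⟩ := hinv (θ 0 + d) (by linarith)
  set x₀ := θinv (θ 0 + d)
  have hθx : θ 0 + d ≤ θ x := hx₀θ ▸ hθmono hx₀ (hx₀.trans hx) hx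
  obtain ⟨hy₀, hyθ, -⟩ := hinv (θ x - c) (by linarith)
  constructor
  · by_contra! hy
    -- convexity of `θ`: an increment over `[x - x₀, x]` dominates the one over `[0, x₀]`
    have hincr := monotone_sub_comp_add_of_monotone_deriv hθ hmono hx₀ (sub_nonneg.2 hx)
    have hθy := hθmono hy₀ (sub_nonneg.2 hx) hy.le
    simp only [zero_add, sub_add_cancel] at hincr
    linarith
  · by_contra! hy
    linarith [hθmono (hx₀.trans hx) hy₀ hy.le]

lemma TailBounds.of_isLeastNonnegPreimage (hθ : ∀ x, HasDerivAt θ (θ' x) x)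
    (hmono : Monotone θ') (hpos : ∀ x, 0 ≤ x → 0 ≤ θ' x) (hinv : IsLeastNonnegPreimage θ θinv)
    {c d : ℝ} (hc : 0 < c) (hcd : c < d)
    (hf : ∀ x, θinv (θ 0 + d) ≤ x → f x = θ' (θinv (θ x - c)) ^ 2) :
    TailBounds θ' f (θinv (θ 0 + d)) := by
  have hθmono := monotoneOn_Ici_of_hasDerivAt hθ hpos
  obtain ⟨hx₀, hx₀θ, -⟩ := hinv (θ 0 + d) (by linarith)
  have hα : ∀ x, θinv (θ 0 + d) ≤ x → θ 0 ≤ θ x - c := fun x hx => by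
    linarith [hx₀θ ▸ hθmono hx₀ (hx₀.trans hx) hx]
  refine ⟨hx₀, fun x hx y hy hxy => ?_, fun x hx => ?_, fun x hx => ?_⟩
  · rw [hf x hx, hf y hy]
    refine pow_le_pow_left₀ (hpos _ (hinv _ (hα x hx)).1) (hmono ?_) 2
    exact hinv.monotoneOn hθmono (hα x hx) (hα y hy)
      (by linarith [hθmono (hx₀.trans hx) (hx₀.trans (mem_Ici.1 hx |>.trans hxy)) hxy])
  · obtain ⟨hlow, -⟩ := hinv.inv_sub_mem_Icc hθ hmono hpos hc hcd hx
    rw [hf x hx]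
    exact pow_le_pow_left₀ (hpos _ (sub_nonneg.2 hx)) (hmono hlow) 2
  · obtain ⟨-, hup⟩ := hinv.inv_sub_mem_Icc hθ hmono hpos hc hcd hx
    rw [hf x hx]
    exact pow_le_pow_left₀ (hpos _ (hinv _ (hα x hx)).1) (hmono hup) 2

lemma TailBounds.of_isGreatestNonposPreimage (hθ : ∀ x, HasDerivAt θ (θ' x) x)
    (hmono : Monotone θ') (hneg : ∀ x, x ≤ 0 → θ' x ≤ 0) (hinv : IsGreatestNonposPreimage θ θinv)
    {c d : ℝ} (hc : 0 < c) (hcd : c < d)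
    (hf : ∀ x, x ≤ θinv (θ 0 + d) → f x = θ' (θinv (θ x - c)) ^ 2) :
    TailBounds (fun x => -θ' (-x)) (fun x => f (-x)) (-θinv (θ 0 + d)) := by
  have := TailBounds.of_isLeastNonnegPreimage (θ := fun x => θ (-x)) (f := fun x => f (-x))
    (fun x => by
      have := (hθ (-x)).comp x (hasDerivAt_neg x)
      simp only [mul_neg, mul_one] at this
      exact this)
    (fun x y hxy => neg_le_neg (hmono (neg_le_neg hxy)))
    (fun x hx => neg_nonneg.2 (hneg _ (neg_nonpos.2 hx))) hinv.neg hc hcd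
    (fun x hx => by rw [hf (-x) (by simpa using neg_le_of_neg_le hx)]; simp)
  simpa using this

lemma aemeasurable_of_antitoneOn_Iic_of_monotoneOn_Ioi {μ : Measure ℝ}
    (h₁ : AntitoneOn f (Iic a)) (h₂ : MonotoneOn f (Ioi a)) : AEMeasurable f μ := by
  rw [← Measure.restrict_univ (μ := μ), ← Iic_union_Ioi (a := a), aemeasurable_union_iff]
  exact ⟨aemeasurable_restrict_of_antitoneOn measurableSet_Iic h₁,
    aemeasurable_restrict_of_monotoneOn measurableSet_Ioi h₂⟩

structure ProfileBounds (θ' f : ℝ → ℝ) (a b : ℝ) : Prop where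
  le : a ≤ b
  nonneg : ∀ x, 0 ≤ f x
  le_sq : ∀ x, f x ≤ θ' x ^ 2
  sq_sub_le_of_ge : ∀ x, b ≤ x → θ' (x - b) ^ 2 ≤ f x
  sq_sub_le_of_le : ∀ x, x ≤ a → θ' (x - a) ^ 2 ≤ f x
  aemeasurable : AEMeasurable f

lemma ProfileBounds.of_tailBounds (hR : TailBounds θ' f b)
    (hL : TailBounds (fun x => -θ' (-x)) (fun x => f (-x)) (-a))
    (hmid : ∀ x, a < x → x < b → f x = 0) : ProfileBounds θ' f a b := by
  have hab : a ≤ b := by linarith [hR.zero_le, hL.zero_le]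
  have hleft : ∀ x, x ≤ a → θ' (x - a) ^ 2 ≤ f x ∧ f x ≤ θ' x ^ 2 := fun x hx => by
    have h₁ := hL.sq_sub_le (-x) (neg_le_neg hx)
    have h₂ := hL.le_sq (-x) (neg_le_neg hx)
    simp only [neg_neg, neg_sq, sub_neg_eq_add, neg_add_eq_sub, neg_sub] at h₁ h₂
    exact ⟨h₁, h₂⟩
  have hnonneg : ∀ x, 0 ≤ f x := fun x => by
    rcases le_or_gt b x with hbx | hxb
    · exact (sq_nonneg _).trans (hR.sq_sub_le x hbx)
    rcases le_or_gt x a with hxa | hax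
    · exact (sq_nonneg _).trans (hleft x hxa).1
    · exact (hmid x hax hxb).ge
  refine ⟨hab, hnonneg, fun x => ?_, hR.sq_sub_le, fun x hx => (hleft x hx).1, ?_⟩
  · rcases le_or_gt b x with hbx | hxb
    · exact hR.le_sq x hbx
    rcases le_or_gt x a with hxa | hax
    · exact (hleft x hxa).2
    · exact (hmid x hax hxb).trans_le (sq_nonneg _)
  refine aemeasurable_of_antitoneOn_Iic_of_monotoneOn_Ioi (a := a)
    (fun u hu v hv huv => ?_) (fun u hu v hv huv => ?_)
  · simpa using hL.monotoneOn (neg_le_neg (mem_Iic.1 hv)) (neg_le_neg (mem_Iic.1 hu))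
      (neg_le_neg huv)
  · rcases lt_or_ge u b with hub | hbu
    · exact (hmid u hu hub).trans_le (hnonneg v)
    · exact hR.monotoneOn hbu (hbu.trans huv) huv

lemma ProfileBounds.integral_negPartRpow_le (P : ProfileBounds θ' f a b) {p ε Λ : ℝ}
    (hp : 0 ≤ p) (hε : 0 < ε) (hΛ : 0 ≤ Λ) (hint : Integrable fun x => negPartRpow p (ε * θ' x ^ 2 - Λ)) :
    Integrable (fun x => negPartRpow p (ε * f x - Λ)) ∧
      ∫ x, negPartRpow p (ε * f x - Λ) ≤
        (∫ x, negPartRpow p (ε * θ' x ^ 2 - Λ)) + (b - a) * Λ ^ p := by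
  have hφ := antitone_negPartRpow hp
  refine integral_le_of_le_translates P.le hint (fun _ => negPartRpow_nonneg _ _)
    ((continuous_negPartRpow hp).comp_aestronglyMeasurable
      ((P.aemeasurable.const_mul ε).sub_const Λ).aestronglyMeasurable)
    (fun _ => negPartRpow_nonneg _ _) (fun x => ?_) (fun x hx => hφ ?_) (fun x hx => hφ ?_)
  · rw [← negPartRpow_neg p hΛ]
    exact hφ (by nlinarith [P.nonneg x])
  · gcongr
    exact P.sq_sub_le_of_ge x hx.le
  · gcongr
    exact P.sq_sub_le_of_le x hx

end Profile

theorem ratio_tendsto_one_general (θ θ' : ℝ → ℝ)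
    (hθ : ∀ x, HasDerivAt θ (θ' x) x)
    (hmono : Monotone θ')
    (hpos : ∀ x, 0 ≤ x → 0 ≤ θ' x) (hneg : ∀ x, x ≤ 0 → θ' x ≤ 0)
    (hinf : Tendsto (fun x => |θ' x|) (cocompact ℝ) atTop)
    (θinvp θinvm : ℝ → ℝ)
    (hinvp : ∀ α, θ 0 ≤ α →
      0 ≤ θinvp α ∧ θ (θinvp α) = α ∧ ∀ z, 0 ≤ z → θ z = α → θinvp α ≤ z)
    (hinvm : ∀ α, θ 0 ≤ α →
      θinvm α ≤ 0 ∧ θ (θinvm α) = α ∧ ∀ z, z ≤ 0 → θ z = α → z ≤ θinvm α)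
    (f : ℝ → ℝ)
    (hf₁ : ∀ x, θinvp (θ 0 + 2 * π) ≤ x → f x = (θ' (θinvp (θ x - π))) ^ 2)
    (hf₂ : ∀ x, x ≤ θinvm (θ 0 + 2 * π) → f x = (θ' (θinvm (θ x - π))) ^ 2)
    (hf₃ : ∀ x, θinvm (θ 0 + 2 * π) < x → x < θinvp (θ 0 + 2 * π) → f x = 0)
    (σ ε : ℝ) (hσ : 0 ≤ σ) (hε₀ : 0 < ε) :
    Tendsto (fun Λ : ℝ =>
        (∫ x : ℝ, (max (-(ε * f x - Λ)) 0) ^ (σ + 3 / 2 : ℝ)) /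
          ∫ x : ℝ, (max (-(ε * (θ' x) ^ 2 - Λ)) 0) ^ (σ + 3 / 2 : ℝ))
      atTop (nhds 1) := by
  have hp : 0 < σ + 3 / 2 := by linarith
  have hπ : π < 2 * π := by linarith [pi_pos]
  have P : ProfileBounds θ' f (θinvm (θ 0 + 2 * π)) (θinvp (θ 0 + 2 * π)) :=
    .of_tailBounds (.of_isLeastNonnegPreimage hθ hmono hpos hinvp pi_pos hπ hf₁)
      (.of_isGreatestNonposPreimage hθ hmono hneg hinvm pi_pos hπ hf₂) hf₃
  have hψ : Tendsto (fun x => ε * θ' x ^ 2) (cocompact ℝ) atTop := by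
    simpa only [Function.comp_def, sq_abs] using
      ((tendsto_pow_atTop two_ne_zero).comp hinf).const_mul_atTop hε₀
  have hint := integrable_negPartRpow_sub hp ((hmono.measurable.pow_const 2).const_mul ε)
    (fun x => by positivity) hψ
  have hbdd : ∀ T, BddAbove ((fun x => ε * θ' x ^ 2) '' Icc 0 T) := fun T =>
    ⟨ε * θ' T ^ 2, by
      rintro _ ⟨x, hx, rfl⟩
      exact mul_le_mul_of_nonneg_left (pow_le_pow_left₀ (hpos x hx.1) (hmono hx.2) 2) hε₀.le⟩
  show Tendsto (fun Λ => (∫ x, negPartRpow (σ + 3 / 2) (ε * f x - Λ)) /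
    ∫ x, negPartRpow (σ + 3 / 2) (ε * θ' x ^ 2 - Λ)) atTop (𝓝 1)
  refine tendsto_div_nhds_one_of_le_of_le_add (C := θinvp (θ 0 + 2 * π) - θinvm (θ 0 + 2 * π))
    (tendsto_integral_negPartRpow_sub_div_rpow hp hbdd hint)
    ((eventually_gt_atTop 0).mono fun Λ hΛ => rpow_pos_of_pos hΛ _) ?_ ?_ <;>
    filter_upwards [eventually_ge_atTop 0] with Λ hΛ
  · refine integral_mono (hint Λ) (P.integral_negPartRpow_le hp.le hε₀ hΛ (hint Λ)).1
      fun x => antitone_negPartRpow hp.le ?_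
    gcongr
    exact P.le_sq x
  · exact (P.integral_negPartRpow_le hp.le hε₀ hΛ (hint Λ)).2

/-- Proposition 4.1: for every `σ ≥ 0` and `0 < ε < 1`, the ratio
`[∫_ℝ (ε f(x₁) − Λ)₋^{σ+3/2} dx₁] / [∫_ℝ (ε θ'(x₁)² − Λ)₋^{σ+3/2} dx₁]` tends to `1`
as `Λ → +∞`. Here `(z)₋ = max(−z,0)`. -/
theorem ratio_tendsto_one (θ θ' : ℝ → ℝ)
    (hθ : ∀ x, HasDerivAt θ (θ' x) x) (hθ'c : Continuous θ')
    (hmono : Monotone θ')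
    (hpos : ∀ x, 0 ≤ x → 0 ≤ θ' x) (hneg : ∀ x, x ≤ 0 → θ' x ≤ 0)
    (hinf : Tendsto (fun x => |θ' x|) (cocompact ℝ) atTop)
    (θinvp θinvm : ℝ → ℝ)
    (hinvp : ∀ α, θ 0 ≤ α →
      0 ≤ θinvp α ∧ θ (θinvp α) = α ∧ ∀ z, 0 ≤ z → θ z = α → θinvp α ≤ z)
    (hinvm : ∀ α, θ 0 ≤ α →
      θinvm α ≤ 0 ∧ θ (θinvm α) = α ∧ ∀ z, z ≤ 0 → θ z = α → z ≤ θinvm α)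
    (f : ℝ → ℝ)
    (hf₁ : ∀ x, θinvp (θ 0 + 2 * π) ≤ x → f x = (θ' (θinvp (θ x - π))) ^ 2)
    (hf₂ : ∀ x, x ≤ θinvm (θ 0 + 2 * π) → f x = (θ' (θinvm (θ x - π))) ^ 2)
    (hf₃ : ∀ x, θinvm (θ 0 + 2 * π) < x → x < θinvp (θ 0 + 2 * π) → f x = 0)
    (σ ε : ℝ) (hσ : 0 ≤ σ) (hε₀ : 0 < ε) (hε₁ : ε < 1) :
    Tendsto (fun Λ : ℝ =>
        (∫ x : ℝ, (max (-(ε * f x - Λ)) 0) ^ (σ + 3 / 2 : ℝ)) /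
          ∫ x : ℝ, (max (-(ε * (θ' x) ^ 2 - Λ)) 0) ^ (σ + 3 / 2 : ℝ))
      atTop (nhds 1) :=
  ratio_tendsto_one_general θ θ' hθ hmono hpos hneg hinf θinvp θinvm hinvp hinvm f hf₁ hf₂ hf₃ σ ε
    hσ hε₀
end

section
/- For every real-valued continuously differentiable function u on ℝ³ whose support is compact and contained in Ω, one has ∫_{ℝ³} |∂u/∂x₁(x₁,x₂,x₃)|² dx₁dx₂dx₃ ≥ ∫_{ℝ³} f̃(x₁)|u(x₁,x₂,x₃)|² dx₁dx₂dx₃. (The variant of Lemma 3.1 for a monotone rotation angle, stated in Section 4.1 of the paper with the modified function f̃ from (tildef).) -/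
open Real Set Filter MeasureTheory intervalIntegral Topology

/-!
Write `(x₂, x₃) = ρ (cos φ, sin φ)`. The rotated-back first coordinate of a point of `Ω` is
`ρ cos (θ x₁ + φ) > 0`, so every slice `v = u (·, x₂, x₃)` vanishes at the points `s_k` with
`θ s_k = π/2 - φ + kπ`. Across a cell `[s_k, s_{k+1}]` the angle turns by exactly `π`; by the mean
value theorem and the monotonicity of `θ'` on either side of `0`, the half-turn lag built into `f̃`
gives `f̃ ≤ (π / (s_{k+1} - s_k))²` on the cell (and `f̃ = 0` on the cell around `0`). Wirtinger's
inequality `(π / L)² ∫ v² ≤ ∫ v'²` for functions vanishing at both ends of an interval of length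
`L` then bounds each cell; summing over the cells and integrating over `(x₂, x₃)` (Fubini) gives
the estimate.
-/

theorem hasDerivAt_cot_mul_sq {v : ℝ → ℝ} {v' : ℝ} {c d t : ℝ} (hv : HasDerivAt v v' t)
    (hs : sin (c * t + d) ≠ 0) :
    HasDerivAt (fun t => cos (c * t + d) / sin (c * t + d) * v t ^ 2)
      (-c * (1 + (cos (c * t + d) / sin (c * t + d)) ^ 2) * v t ^ 2
        + cos (c * t + d) / sin (c * t + d) * (2 * v t * v')) t := by
  have hψ : HasDerivAt (fun t => c * t + d) c t := by
    simpa using ((hasDerivAt_id t).const_mul c).add_const d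
  refine ((hψ.cos.fun_div hψ.sin hs).mul (hv.fun_pow 2)).congr_deriv ?_
  field_simp
  ring

theorem sq_mul_integral_sq_le_integral_deriv_sq {v : ℝ → ℝ} (hv : ContDiff ℝ 1 v) {a b c : ℝ}
    (hab : a ≤ b) (ha : v a = 0) (hb : v b = 0) (hc : 0 < c) (hcπ : c * (b - a) < π) :
    c ^ 2 * ∫ t in a..b, v t ^ 2 ≤ ∫ t in a..b, deriv v t ^ 2 := by
  set d := (π - c * (b - a)) / 2 - c * a with hd
  have hsin : ∀ t ∈ uIcc a b, sin (c * t + d) ≠ 0 := by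
    intro t ht
    rw [uIcc_of_le hab] at ht
    refine (sin_pos_of_pos_of_lt_pi ?_ ?_).ne' <;>
      nlinarith [mul_nonneg hc.le (sub_nonneg.2 ht.1), mul_nonneg hc.le (sub_nonneg.2 ht.2)]
  set w : ℝ → ℝ := fun t => cos (c * t + d) / sin (c * t + d)
  set g' : ℝ → ℝ := fun t => -c * (1 + w t ^ 2) * v t ^ 2 + w t * (2 * v t * deriv v t)
  have hdv : ∀ t, HasDerivAt v (deriv v t) t :=
    fun t => (hv.differentiable one_ne_zero t).hasDerivAt
  have hvc : Continuous v := hv.continuous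
  have hv'c : Continuous (deriv v) := hv.continuous_deriv le_rfl
  have hg : ∫ t in a..b, g' t = 0 := by
    rw [integral_eq_sub_of_hasDerivAt (fun t ht => hasDerivAt_cot_mul_sq (hdv t) (hsin t ht))]
    · simp [ha, hb]
    · exact ContinuousOn.intervalIntegrable (by fun_prop)
  have hsq : IntervalIntegrable (fun t => (deriv v t - c * w t * v t) ^ 2) volume a b :=
    ContinuousOn.intervalIntegrable (by fun_prop)
  -- Pointwise `v'² - c² v² = (v' - c w v)² + c (w v²)'`, and `w v²` vanishes at `a` and `b`.
  have hsplit : ∫ t in a..b, (deriv v t ^ 2 - c ^ 2 * v t ^ 2)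
      = (∫ t in a..b, (deriv v t - c * w t * v t) ^ 2) + c * ∫ t in a..b, g' t := by
    rw [← intervalIntegral.integral_const_mul, ← integral_add hsq]
    · exact integral_congr fun t _ => by ring
    · exact (ContinuousOn.intervalIntegrable (by fun_prop)).const_mul c
  rw [integral_sub (f := fun t => deriv v t ^ 2) (g := fun t => c ^ 2 * v t ^ 2)
    ((hv'c.pow 2).intervalIntegrable _ _)
    ((continuous_const.mul (hvc.pow 2)).intervalIntegrable _ _),
    intervalIntegral.integral_const_mul, hg] at hsplit
  have := integral_nonneg (μ := volume) hab fun t _ => sq_nonneg (deriv v t - c * w t * v t)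
  linarith

theorem pi_div_sq_mul_integral_sq_le_integral_deriv_sq {v : ℝ → ℝ} (hv : ContDiff ℝ 1 v)
    {a b : ℝ} (hab : a < b) (ha : v a = 0) (hb : v b = 0) :
    (π / (b - a)) ^ 2 * ∫ t in a..b, v t ^ 2 ≤ ∫ t in a..b, deriv v t ^ 2 := by
  have hba : 0 < b - a := sub_pos.2 hab
  refine le_of_tendsto (((continuous_pow 2).mul continuous_const).tendsto _ |>.mono_left
    nhdsWithin_le_nhds) (eventually_of_mem (Ioo_mem_nhdsLT (by positivity)) fun c hc => ?_)
  exact sq_mul_integral_sq_le_integral_deriv_sq hv hab.le ha hb hc.1 ((lt_div_iff₀ hba).1 hc.2)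

theorem integral_mul_sq_le_integral_deriv_sq_of_le {f v : ℝ → ℝ} (hv : ContDiff ℝ 1 v) {a b : ℝ}
    (hab : a < b) (ha : v a = 0) (hb : v b = 0)
    (hfv : IntervalIntegrable (fun t => f t * v t ^ 2) volume a b)
    (hf : ∀ t ∈ Icc a b, f t ≤ (π / (b - a)) ^ 2) :
    ∫ t in a..b, f t * v t ^ 2 ≤ ∫ t in a..b, deriv v t ^ 2 :=
  calc ∫ t in a..b, f t * v t ^ 2 ≤ ∫ t in a..b, (π / (b - a)) ^ 2 * v t ^ 2 :=
        integral_mono_on hab.le hfv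
          ((continuous_const.mul (hv.continuous.pow 2)).intervalIntegrable _ _)
          fun t ht => mul_le_mul_of_nonneg_right (hf t ht) (sq_nonneg _)
    _ = (π / (b - a)) ^ 2 * ∫ t in a..b, v t ^ 2 := intervalIntegral.integral_const_mul _ _
    _ ≤ ∫ t in a..b, deriv v t ^ 2 := pi_div_sq_mul_integral_sq_le_integral_deriv_sq hv hab ha hb

theorem integral_mul_sq_le_integral_deriv_sq_of_zeros {f v : ℝ → ℝ} (hv : ContDiff ℝ 1 v)
    (hfv : Integrable fun t => f t * v t ^ 2) (hv' : Integrable fun t => deriv v t ^ 2)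
    {s : ℤ → ℝ} (hs : StrictMono s) (hs_bot : Tendsto s atBot atBot)
    (hs_top : Tendsto s atTop atTop) (hvs : ∀ k, v (s k) = 0)
    (hf : ∀ k, ∀ t ∈ Icc (s k) (s (k + 1)), f t ≤ (π / (s (k + 1) - s k)) ^ 2) :
    ∫ t, f t * v t ^ 2 ≤ ∫ t, deriv v t ^ 2 := by
  have hcells : ∀ m n, m ≤ n →
      ∫ t in s m..s n, f t * v t ^ 2 ≤ ∫ t in s m..s n, deriv v t ^ 2 := by
    intro m n hmn
    induction n, hmn using Int.leInduction with
    | base => simp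
    | succ n _ ih =>
      rw [← integral_add_adjacent_intervals (b := s n) hfv.intervalIntegrable
          hfv.intervalIntegrable,
        ← integral_add_adjacent_intervals (b := s n) hv'.intervalIntegrable hv'.intervalIntegrable]
      exact add_le_add ih (integral_mul_sq_le_integral_deriv_sq_of_le hv (hs (lt_add_one n))
        (hvs n) (hvs (n + 1)) hfv.intervalIntegrable (hf n))
  have hneg : Tendsto (fun n : ℤ => s (-n)) atTop atBot := hs_bot.comp tendsto_neg_atTop_atBot
  exact le_of_tendsto_of_tendsto (intervalIntegral_tendsto_integral hfv hneg hs_top)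
    (intervalIntegral_tendsto_integral hv' hneg hs_top)
    (eventually_atTop.2 ⟨0, fun n hn => hcells _ _ (by omega)⟩)

theorem Continuous.le_of_le_preimages {θ : ℝ → ℝ} (hθ : Continuous θ) {a s α m : ℝ}
    (has : a ≤ s) (hα : α ∈ Icc (θ a) (θ s)) (hm : ∀ z, a ≤ z → θ z = α → m ≤ z) : m ≤ s := by
  obtain ⟨z, hz, rfl⟩ := intermediate_value_Icc has hθ.continuousOn hα
  exact (hm z hz.1 rfl).trans hz.2

theorem Continuous.le_of_preimages_le {θ : ℝ → ℝ} (hθ : Continuous θ) {a s α m : ℝ}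
    (hsa : s ≤ a) (hα : α ∈ Icc (θ s) (θ a)) (hm : ∀ z, z ≤ a → θ z = α → z ≤ m) : s ≤ m := by
  obtain ⟨z, hz, rfl⟩ := intermediate_value_Icc hsa hθ.continuousOn hα
  exact hz.1.trans (hm z hz.2 rfl)

theorem Monotone.exists_strictMono_map_eq_add_mul {θ : ℝ → ℝ} (hθ : Monotone θ)
    (hθs : Function.Surjective θ) (ℓ : ℝ) {p : ℝ} (hp : 0 < p) :
    ∃ s : ℤ → ℝ, StrictMono s ∧ Tendsto s atBot atBot ∧ Tendsto s atTop atTop ∧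
      ∀ k : ℤ, θ (s k) = ℓ + k * p := by
  set s : ℤ → ℝ := fun k => Function.surjInv hθs (ℓ + k * p)
  have hθs_eq : ∀ k : ℤ, θ (s k) = ℓ + k * p := fun k => Function.surjInv_eq hθs _
  have hsm : StrictMono s := fun m n hmn => hθ.reflect_lt <| by
    rw [hθs_eq, hθs_eq]
    gcongr
  refine ⟨s, hsm, hsm.monotone.tendsto_atBot_atBot_iff.2 fun M => ?_,
    hsm.monotone.tendsto_atTop_atTop_iff.2 fun M => ?_, hθs_eq⟩
  · obtain ⟨k, hk⟩ := exists_int_lt ((θ M - ℓ) / p)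
    refine ⟨k, (hθ.reflect_lt ?_).le⟩
    rw [hθs_eq]
    linarith [(lt_div_iff₀ hp).1 hk]
  · obtain ⟨k, hk⟩ := exists_int_gt ((θ M - ℓ) / p)
    refine ⟨k, (hθ.reflect_lt ?_).le⟩
    rw [hθs_eq]
    linarith [(div_lt_iff₀ hp).1 hk]

theorem le_sq_pi_div_of_map_eq_add_pi {θ θ' f : ℝ → ℝ} (hθ : ∀ x, HasDerivAt θ (θ' x) x)
    (hpos : ∀ x, 0 ≤ θ' x) (hmonoP : MonotoneOn θ' (Ici 0)) (hmonoM : AntitoneOn θ' (Iic 0))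
    (hf_right : ∀ s t, 0 ≤ s → s ≤ t → θ t ≤ θ s + π → f t ≤ θ' s ^ 2)
    (hf_left : ∀ s t, s ≤ 0 → t ≤ s → θ s ≤ θ t + π → f t ≤ θ' s ^ 2)
    (hf_mid : ∀ t, θ 0 - π ≤ θ t → θ t ≤ θ 0 + π → f t ≤ 0)
    {s s' t : ℝ} (hss' : s < s') (hθss' : θ s' = θ s + π) (ht : t ∈ Icc s s') :
    f t ≤ (π / (s' - s)) ^ 2 := by
  have hθm : Monotone θ := monotone_of_hasDerivAt_nonneg hθ hpos
  have hθc : Continuous θ := continuous_iff_continuousAt.2 fun x => (hθ x).continuousAt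
  obtain ⟨ξ, hξ, hθ'ξ⟩ := exists_hasDerivAt_eq_slope θ θ' hss' hθc.continuousOn fun x _ => hθ x
  rw [hθss', add_sub_cancel_left] at hθ'ξ
  have hts := hθm ht.1
  have hts' := hθm ht.2
  rcases le_or_gt 0 s with hs | hs
  · calc f t ≤ θ' s ^ 2 := hf_right s t hs ht.1 (hθss' ▸ hts')
      _ ≤ (π / (s' - s)) ^ 2 := by
        gcongr
        · exact hpos s
        · exact hθ'ξ ▸ hmonoP hs (hs.trans hξ.1.le) hξ.1.le
  rcases le_or_gt s' 0 with hs' | hs'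
  · calc f t ≤ θ' s' ^ 2 := hf_left s' t hs' ht.2 (by linarith)
      _ ≤ (π / (s' - s)) ^ 2 := by
        gcongr
        · exact hpos s'
        · exact hθ'ξ ▸ hmonoM (hξ.2.le.trans hs') hs' hξ.2.le
  have h0s := hθm hs.le
  have h0s' := hθm hs'.le
  exact (hf_mid t (by linarith) (by linarith)).trans (sq_nonneg _)

theorem eq_zero_of_map_mem_Ioo {θ θinvp θinvm ftilde : ℝ → ℝ} (hθ : Monotone θ)
    (hinvp : θ (θinvp (θ 0 + 2 * π)) = θ 0 + 2 * π)
    (hinvm : θ (θinvm (θ 0 - 2 * π)) = θ 0 - 2 * π)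
    (hf₃ : ∀ x, θinvm (θ 0 - 2 * π) < x → x < θinvp (θ 0 + 2 * π) → ftilde x = 0) :
    ∀ t, θ t ∈ Ioo (θ 0 - 2 * π) (θ 0 + 2 * π) → ftilde t = 0 := fun t ht =>
  hf₃ t (hθ.reflect_lt (by rw [hinvm]; exact ht.1)) (hθ.reflect_lt (by rw [hinvp]; exact ht.2))

theorem le_sq_deriv_of_le_add_pi_of_nonneg {θ θ' θinvp ftilde : ℝ → ℝ} (hθc : Continuous θ)
    (hθm : Monotone θ) (hpos : ∀ x, 0 ≤ θ' x) (hmonoP : MonotoneOn θ' (Ici 0))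
    (hinvp : ∀ α, θ 0 ≤ α →
      0 ≤ θinvp α ∧ θ (θinvp α) = α ∧ ∀ z, 0 ≤ z → θ z = α → θinvp α ≤ z)
    (hf₁ : ∀ x, θinvp (θ 0 + 2 * π) ≤ x → ftilde x = (θ' (θinvp (θ x - π))) ^ 2)
    (hf₀ : ∀ t, θ t ∈ Ioo (θ 0 - 2 * π) (θ 0 + 2 * π) → ftilde t = 0) :
    ∀ s t, 0 ≤ s → s ≤ t → θ t ≤ θ s + π → ftilde t ≤ θ' s ^ 2 := by
  intro s t hs hst hts
  have hθt := hθm (hs.trans hst)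
  by_cases h : θ 0 + 2 * π ≤ θ t
  · have hα : θ 0 ≤ θ t - π := by linarith [pi_pos]
    obtain ⟨hz, -, hzmin⟩ := hinvp _ hα
    rw [hf₁ t (hθc.le_of_le_preimages (hs.trans hst) ⟨by linarith [pi_pos], h⟩
      (hinvp _ (by linarith [pi_pos])).2.2)]
    exact pow_le_pow_left₀ (hpos _)
      (hmonoP hz hs (hθc.le_of_le_preimages hs ⟨hα, by linarith⟩ hzmin)) 2
  · rw [hf₀ t ⟨by linarith [pi_pos], not_le.1 h⟩]
    positivity

theorem le_sq_deriv_of_le_add_pi_of_nonpos {θ θ' θinvm ftilde : ℝ → ℝ} (hθc : Continuous θ)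
    (hθm : Monotone θ) (hpos : ∀ x, 0 ≤ θ' x) (hmonoM : AntitoneOn θ' (Iic 0))
    (hinvm : ∀ β, β ≤ θ 0 →
      θinvm β ≤ 0 ∧ θ (θinvm β) = β ∧ ∀ z, z ≤ 0 → θ z = β → z ≤ θinvm β)
    (hf₂ : ∀ x, x ≤ θinvm (θ 0 - 2 * π) → ftilde x = (θ' (θinvm (θ x + π))) ^ 2)
    (hf₀ : ∀ t, θ t ∈ Ioo (θ 0 - 2 * π) (θ 0 + 2 * π) → ftilde t = 0) :
    ∀ s t, s ≤ 0 → t ≤ s → θ s ≤ θ t + π → ftilde t ≤ θ' s ^ 2 := by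
  intro s t hs hts hst
  have hθt := hθm (hts.trans hs)
  by_cases h : θ t ≤ θ 0 - 2 * π
  · have hβ : θ t + π ≤ θ 0 := by linarith [pi_pos]
    obtain ⟨hz, -, hzmax⟩ := hinvm _ hβ
    rw [hf₂ t (hθc.le_of_preimages_le (hts.trans hs) ⟨h, by linarith [pi_pos]⟩
      (hinvm _ (by linarith [pi_pos])).2.2)]
    exact pow_le_pow_left₀ (hpos _)
      (hmonoM hs hz (hθc.le_of_preimages_le hs ⟨by linarith, hβ⟩ hzmax)) 2
  · rw [hf₀ t ⟨not_le.1 h, by linarith [pi_pos]⟩]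
    positivity

theorem integral_mul_sq_le_integral_deriv_sq_of_cos_eq_zero {θ f v : ℝ → ℝ} (hθ : Monotone θ)
    (hθs : Function.Surjective θ)
    (hf : ∀ s s' t, s < s' → θ s' = θ s + π → t ∈ Icc s s' → f t ≤ (π / (s' - s)) ^ 2)
    (hv : ContDiff ℝ 1 v) (hfv : Integrable fun t => f t * v t ^ 2)
    (hv' : Integrable fun t => deriv v t ^ 2) {φ : ℝ} (hvz : ∀ t, cos (θ t + φ) = 0 → v t = 0) :
    ∫ t, f t * v t ^ 2 ≤ ∫ t, deriv v t ^ 2 := by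
  obtain ⟨s, hs, hs_bot, hs_top, hθs_eq⟩ :=
    hθ.exists_strictMono_map_eq_add_mul hθs (π / 2 - φ) pi_pos
  refine integral_mul_sq_le_integral_deriv_sq_of_zeros hv hfv hv' hs hs_bot hs_top
    (fun k => hvz _ ?_) fun k t => hf _ _ t (hs (lt_add_one k)) ?_
  · rw [hθs_eq, cos_eq_zero_iff]
    exact ⟨k, by ring⟩
  · rw [hθs_eq, hθs_eq]
    push_cast
    ring

theorem exists_mul_cos_add_eq (a b : ℝ) :
    ∃ ρ φ : ℝ, ∀ α, a * cos α - b * sin α = ρ * cos (α + φ) := by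
  refine ⟨‖(⟨a, b⟩ : ℂ)‖, Complex.arg ⟨a, b⟩, fun α => ?_⟩
  have h₁ := Complex.norm_mul_cos_arg ⟨a, b⟩
  have h₂ := Complex.norm_mul_sin_arg ⟨a, b⟩
  rw [cos_add]
  linear_combination (-cos α) * h₁ + sin α * h₂

theorem exists_forall_cos_eq_zero_imp_eq_zero {θ : ℝ → ℝ} {ω : Set (ℝ × ℝ)}
    (hω : ω ⊆ {y : ℝ × ℝ | 0 < y.1}) {u : ℝ × ℝ × ℝ → ℝ}
    (hu : tsupport u ⊆ (fun q : ℝ × ℝ × ℝ =>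
      (q.1, q.2.1 * cos (θ q.1) + q.2.2 * sin (θ q.1),
       q.2.2 * cos (θ q.1) - q.2.1 * sin (θ q.1))) '' (univ ×ˢ ω)) (y : ℝ × ℝ) :
    ∃ φ, ∀ t, cos (θ t + φ) = 0 → u (t, y) = 0 := by
  obtain ⟨y₁, y₂⟩ := y
  obtain ⟨ρ, φ, hρφ⟩ := exists_mul_cos_add_eq y₁ y₂
  refine ⟨φ, fun t ht => by_contra fun hut => ?_⟩
  obtain ⟨⟨t', x₂, x₃⟩, ⟨-, hx⟩, hq⟩ := hu (subset_tsupport u hut)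
  simp only [Prod.mk.injEq] at hq
  obtain ⟨rfl, rfl, rfl⟩ := hq
  have hx₂ : (x₂ * cos (θ t') + x₃ * sin (θ t')) * cos (θ t')
      - (x₃ * cos (θ t') - x₂ * sin (θ t')) * sin (θ t') = x₂ := by
    linear_combination x₂ * sin_sq_add_cos_sq (θ t')
  rw [hρφ, ht, mul_zero] at hx₂
  exact (hω hx).ne hx₂

theorem HasCompactSupport.comp_prodMkLeft {X Y Z : Type*} [TopologicalSpace X]
    [TopologicalSpace Y] [T1Space Y] [Zero Z] {u : X × Y → Z} (hu : HasCompactSupport u)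
    (y : Y) : HasCompactSupport fun x => u (x, y) :=
  hu.comp_isClosedEmbedding (.of_isEmbedding_isClosedMap (isEmbedding_prodMkLeft y)
    (isClosedMap_prodMk_right y))

theorem deriv_slice_eq_fderiv {E F : Type*} [NormedAddCommGroup E] [NormedSpace ℝ E]
    [NormedAddCommGroup F] [NormedSpace ℝ F] {u : ℝ × E → F} (hu : Differentiable ℝ u)
    (p : ℝ × E) : deriv (fun t => u (t, p.2)) p.1 = fderiv ℝ u p (1, 0) :=
  ((hu p).hasFDerivAt.comp_hasDerivAt p.1
    ((hasDerivAt_id p.1).prodMk (hasDerivAt_const p.1 p.2))).deriv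

theorem integrable_deriv_slice_sq {E : Type*} [NormedAddCommGroup E] [NormedSpace ℝ E]
    [MeasurableSpace E] [BorelSpace E] [SecondCountableTopology E] {μ : Measure (ℝ × E)}
    [IsFiniteMeasureOnCompacts μ] {u : ℝ × E → ℝ} (hu : ContDiff ℝ 1 u)
    (hus : HasCompactSupport u) :
    Integrable (fun p => deriv (fun t => u (t, p.2)) p.1 ^ 2) μ := by
  have hc : Continuous fun p => fderiv ℝ u p (1, 0) ^ 2 :=
    ((hu.continuous_fderiv one_ne_zero).clm_apply continuous_const).pow 2
  refine (hc.integrable_of_hasCompactSupport ((hus.fderiv_apply ℝ (1, 0)).comp_left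
    (zero_pow two_ne_zero))).congr (Eventually.of_forall fun p => ?_)
  simp only [deriv_slice_eq_fderiv (hu.differentiable one_ne_zero) p]

theorem hardy_type_estimate_monotone_general
    (ω : Set (ℝ × ℝ))
    (hω_half : ω ⊆ {y : ℝ × ℝ | 0 < y.1})
    (θ θ' : ℝ → ℝ)
    (hθ : ∀ x, HasDerivAt θ (θ' x) x)
    (hpos : ∀ x, 0 ≤ θ' x)
    (hmonoP : MonotoneOn θ' (Set.Ici 0)) (hmonoM : AntitoneOn θ' (Set.Iic 0))
    (Ω : Set (ℝ × ℝ × ℝ))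
    (hΩ : Ω = (fun q : ℝ × ℝ × ℝ =>
      (q.1, q.2.1 * Real.cos (θ q.1) + q.2.2 * Real.sin (θ q.1),
       q.2.2 * Real.cos (θ q.1) - q.2.1 * Real.sin (θ q.1))) '' (Set.univ ×ˢ ω))
    (θinvp θinvm : ℝ → ℝ)
    (hinvp : ∀ α, θ 0 ≤ α →
      0 ≤ θinvp α ∧ θ (θinvp α) = α ∧ ∀ z, 0 ≤ z → θ z = α → θinvp α ≤ z)
    (hinvm : ∀ β, β ≤ θ 0 →
      θinvm β ≤ 0 ∧ θ (θinvm β) = β ∧ ∀ z, z ≤ 0 → θ z = β → z ≤ θinvm β)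
    (ftilde : ℝ → ℝ)
    (hf₁ : ∀ x, θinvp (θ 0 + 2 * π) ≤ x → ftilde x = (θ' (θinvp (θ x - π))) ^ 2)
    (hf₂ : ∀ x, x ≤ θinvm (θ 0 - 2 * π) → ftilde x = (θ' (θinvm (θ x + π))) ^ 2)
    (hf₃ : ∀ x, θinvm (θ 0 - 2 * π) < x → x < θinvp (θ 0 + 2 * π) → ftilde x = 0)
    (u : ℝ × ℝ × ℝ → ℝ)
    (hu : ContDiff ℝ 1 u)
    (husupp : HasCompactSupport u)
    (huΩ : tsupport u ⊆ Ω) :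
    ∫ p : ℝ × ℝ × ℝ, ftilde p.1 * (u p) ^ 2 ≤
      ∫ p : ℝ × ℝ × ℝ, (deriv (fun t => u (t, p.2)) p.1) ^ 2 := by
  have hθm : Monotone θ := monotone_of_hasDerivAt_nonneg hθ hpos
  have hθc : Continuous θ := continuous_iff_continuousAt.2 fun x => (hθ x).continuousAt
  have hθs : Function.Surjective θ := fun α => (le_total (θ 0) α).elim
    (fun h => ⟨_, (hinvp α h).2.1⟩) fun h => ⟨_, (hinvm α h).2.1⟩
  have hf₀ := eq_zero_of_map_mem_Ioo hθm (hinvp _ (by linarith [pi_pos])).2.1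
    (hinvm _ (by linarith [pi_pos])).2.1 hf₃
  have hcell : ∀ s s' t, s < s' → θ s' = θ s + π → t ∈ Icc s s' →
      ftilde t ≤ (π / (s' - s)) ^ 2 := fun _ _ _ =>
    le_sq_pi_div_of_map_eq_add_pi hθ hpos hmonoP hmonoM
      (le_sq_deriv_of_le_add_pi_of_nonneg hθc hθm hpos hmonoP hinvp hf₁ hf₀)
      (le_sq_deriv_of_le_add_pi_of_nonpos hθc hθm hpos hmonoM hinvm hf₂ hf₀)
      fun t h₁ h₂ => (hf₀ t ⟨by linarith [pi_pos], by linarith [pi_pos]⟩).le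
  -- Without integrability the left-hand side is the junk value `0` of the Bochner integral.
  by_cases hF : Integrable fun p : ℝ × ℝ × ℝ => ftilde p.1 * u p ^ 2
  swap
  · rw [integral_undef hF]
    exact integral_nonneg fun p => sq_nonneg _
  have hG := integrable_deriv_slice_sq (μ := volume) hu husupp
  rw [Measure.volume_eq_prod] at hF hG ⊢
  rw [integral_prod_symm _ hF, integral_prod_symm _ hG]
  refine integral_mono_ae hF.integral_prod_right hG.integral_prod_right ?_
  filter_upwards [hF.prod_left_ae] with y hy
  have hv : ContDiff ℝ 1 fun t => u (t, y) := hu.comp (contDiff_id.prodMk contDiff_const)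
  obtain ⟨φ, hφ⟩ := exists_forall_cos_eq_zero_imp_eq_zero hω_half (hΩ ▸ huΩ) y
  exact integral_mul_sq_le_integral_deriv_sq_of_cos_eq_zero hθm hθs hcell hv hy
    (((hv.continuous_deriv le_rfl).pow 2).integrable_of_hasCompactSupport
      ((husupp.comp_prodMkLeft y).deriv.comp_left (zero_pow two_ne_zero))) hφ

/-- The variant of Lemma 3.1 for a monotone rotation angle (Section 4.1): with `θ' ≥ 0`
everywhere, `θ'` increasing on `[0,∞)` and decreasing on `(−∞,0]`, `|θ'| → ∞` at infinity
(so `θ → +∞` at `+∞` and `θ → −∞` at `−∞`), every continuously differentiable `u : ℝ³ → ℝ`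
with compact support contained in the twisted tube `Ω` satisfies
`∫_{ℝ³} |∂u/∂x₁|² ≥ ∫_{ℝ³} f̃(x₁)|u|²`, with the modified function `f̃` from (tildef). -/
theorem hardy_type_estimate_monotone
    (ω : Set (ℝ × ℝ)) (hω_ne : ω.Nonempty) (hω_bdd : Bornology.IsBounded ω)
    (hω_open : IsOpen ω) (hω_conn : IsConnected ω)
    (hω_half : ω ⊆ {y : ℝ × ℝ | 0 < y.1})
    (θ θ' : ℝ → ℝ)
    (hθ : ∀ x, HasDerivAt θ (θ' x) x) (hθ'c : Continuous θ')
    (hpos : ∀ x, 0 ≤ θ' x)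
    (hmonoP : MonotoneOn θ' (Set.Ici 0)) (hmonoM : AntitoneOn θ' (Set.Iic 0))
    (hinf : Tendsto (fun x => |θ' x|) (cocompact ℝ) atTop)
    (Ω : Set (ℝ × ℝ × ℝ))
    (hΩ : Ω = (fun q : ℝ × ℝ × ℝ =>
      (q.1, q.2.1 * Real.cos (θ q.1) + q.2.2 * Real.sin (θ q.1),
       q.2.2 * Real.cos (θ q.1) - q.2.1 * Real.sin (θ q.1))) '' (Set.univ ×ˢ ω))
    (θinvp θinvm : ℝ → ℝ)
    (hinvp : ∀ α, θ 0 ≤ α →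
      0 ≤ θinvp α ∧ θ (θinvp α) = α ∧ ∀ z, 0 ≤ z → θ z = α → θinvp α ≤ z)
    (hinvm : ∀ β, β ≤ θ 0 →
      θinvm β ≤ 0 ∧ θ (θinvm β) = β ∧ ∀ z, z ≤ 0 → θ z = β → z ≤ θinvm β)
    (ftilde : ℝ → ℝ)
    (hf₁ : ∀ x, θinvp (θ 0 + 2 * π) ≤ x → ftilde x = (θ' (θinvp (θ x - π))) ^ 2)
    (hf₂ : ∀ x, x ≤ θinvm (θ 0 - 2 * π) → ftilde x = (θ' (θinvm (θ x + π))) ^ 2)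
    (hf₃ : ∀ x, θinvm (θ 0 - 2 * π) < x → x < θinvp (θ 0 + 2 * π) → ftilde x = 0)
    (u : ℝ × ℝ × ℝ → ℝ)
    (hu : ContDiff ℝ 1 u)
    (husupp : HasCompactSupport u)
    (huΩ : tsupport u ⊆ Ω) :
    ∫ p : ℝ × ℝ × ℝ, ftilde p.1 * (u p) ^ 2 ≤
      ∫ p : ℝ × ℝ × ℝ, (deriv (fun t => u (t, p.2)) p.1) ^ 2 :=
  hardy_type_estimate_monotone_general ω hω_half θ θ' hθ hpos hmonoP hmonoM Ω hΩ θinvp θinvm hinvp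
    hinvm ftilde hf₁ hf₂ hf₃ u hu husupp huΩ
end
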